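/- arXiv:2006.14801 — 5 statements merged into one kernel-verified Lean document; each statement's English description precedes it below -/
import Mathlib

section
/- Let P₁ and P₂ be Markov transition kernels on a measurable space (Z, F) having a common stationary distribution ω, with ‖P₂‖_ω < 1, and suppose there exists δ > 0 such that P₁(z, A) ≥ δ P₂(z, A) for all z ∈ Z and A ∈ F. Then ‖P₁‖_ω < 1. -/
/-!
The minorization splits `P₁ = δ P₂ + D`, where `D = P₁ - δ P₂` is a kernel of constant mass
`1 - δ` with `ωD = (1 - δ) ω` (in particular `δ ≤ 1`). Cauchy–Schwarz in each fibre gives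
`|Df(z)|² ≤ (1 - δ) · D(f²)(z)`, and integrating against `ω` yields `‖Df‖_ω ≤ (1 - δ) ‖f‖_ω`.
Hence `‖P₁f‖_ω ≤ δ ‖P₂f‖_ω + (1 - δ) ‖f‖_ω`, so `‖P₁‖_ω ≤ δ ‖P₂‖_ω + 1 - δ < 1`.
-/

open MeasureTheory

/-- The operator norm on `L²₀(ω)` of a transition kernel `P` (viewed as a map
`Z → Measure Z`): the supremum of `‖Pf‖_ω` over mean-zero `f` with `‖f‖_ω = 1`. -/
noncomputable def kernelNorm {Z : Type*} [MeasurableSpace Z]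
    (P : Z → Measure Z) (ω : Measure Z) : ℝ :=
  sSup {t : ℝ | ∃ f : Z → ℝ,
    MemLp f 2 ω ∧ (∫ z, f z ∂ω) = 0 ∧ (∫ z, (f z)^2 ∂ω) = 1 ∧
    t = Real.sqrt (∫ z, (∫ x, f x ∂(P z))^2 ∂ω)}

open ProbabilityTheory
open scoped ENNReal NNReal

section
variable {α : Type*} [MeasurableSpace α]

theorem lintegral_sq_le_measure_univ_mul (μ : Measure α) {g : α → ℝ≥0∞}
    (hg : AEMeasurable g μ) :
    (∫⁻ x, g x ∂μ) ^ 2 ≤ μ Set.univ * ∫⁻ x, g x ^ 2 ∂μ := by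
  have h := ENNReal.lintegral_mul_le_Lp_mul_Lq μ Real.HolderConjugate.two_two hg
    (aemeasurable_const (b := (1 : ℝ≥0∞)))
  simp only [Pi.mul_apply, mul_one, ENNReal.one_rpow, lintegral_const, one_mul] at h
  calc (∫⁻ x, g x ∂μ) ^ 2
      ≤ ((∫⁻ x, g x ^ (2 : ℝ) ∂μ) ^ (1 / 2 : ℝ) * μ Set.univ ^ (1 / 2 : ℝ)) ^ 2 := by gcongr
    _ = μ Set.univ * ∫⁻ x, g x ^ 2 ∂μ := by
      rw [mul_pow, ← ENNReal.rpow_natCast, ← ENNReal.rpow_natCast, ← ENNReal.rpow_mul,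
        ← ENNReal.rpow_mul]
      norm_num [mul_comm]

theorem eLpNorm_two_sq_eq_lintegral {E : Type*} [NormedAddCommGroup E] (f : α → E)
    (μ : Measure α) : eLpNorm f 2 μ ^ 2 = ∫⁻ x, ‖f x‖ₑ ^ 2 ∂μ := by
  simpa using eLpNorm_nnreal_pow_eq_lintegral (f := f) (μ := μ) (p := 2) two_ne_zero

theorem lpNorm_two_eq_sqrt_integral_sq {μ : Measure α} {f : α → ℝ}
    (hf : AEStronglyMeasurable f μ) : lpNorm f 2 μ = √(∫ x, f x ^ 2 ∂μ) := by
  rw [show (2 : ℝ≥0∞) = ((2 : ℝ≥0) : ℝ≥0∞) from rfl,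
    lpNorm_nnreal_eq_integral_norm_rpow two_ne_zero hf, Real.sqrt_eq_rpow]
  simp [Real.norm_eq_abs, sq_abs]

end

namespace ProbabilityTheory.Kernel
variable {α β : Type*} [MeasurableSpace α] [MeasurableSpace β]
  {E : Type*} [NormedAddCommGroup E] [NormedSpace ℝ E]

theorem invariant_of_lintegral_eq {P : Kernel α α} {ω : Measure α}
    (hP : ∀ A, MeasurableSet A → ∫⁻ a, P a A ∂ω = ω A) : P.Invariant ω :=
  Measure.ext fun A hA => (Measure.bind_apply hA P.aemeasurable).trans (hP A hA)

theorem aestronglyMeasurable_integral (κ : Kernel α β) {μ : Measure α} {ν : Measure β}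
    (hκ : κ ∘ₘ μ ≪ ν) {f : β → E} (hf : AEStronglyMeasurable f ν) :
    AEStronglyMeasurable (fun a => ∫ x, f x ∂κ a) μ :=
  ⟨fun a => ∫ x, hf.mk f x ∂κ a, hf.stronglyMeasurable_mk.integral_kernel, by
    filter_upwards [Measure.ae_ae_of_ae_comp (hκ.ae_le hf.ae_eq_mk)] with a ha
    exact integral_congr_ae ha⟩

theorem eLpNorm_integral_le (κ : Kernel α β) {μ : Measure α} {ν : Measure β} {m : ℝ≥0}
    (hmass : ∀ a, κ a Set.univ ≤ m) (hκ : κ ∘ₘ μ ≤ (m : ℝ≥0∞) • ν) {f : β → E}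
    (hf : AEStronglyMeasurable f ν) :
    eLpNorm (fun a => ∫ x, f x ∂κ a) 2 μ ≤ m * eLpNorm f 2 ν := by
  have hf' : AEMeasurable (fun x => ‖f x‖ₑ) (κ ∘ₘ μ) :=
    (hf.mono_ac (Measure.absolutelyContinuous_of_le_smul hκ)).enorm
  have hpointwise : ∀ᵐ a ∂μ, ‖∫ x, f x ∂κ a‖ₑ ^ 2 ≤ m * ∫⁻ x, ‖f x‖ₑ ^ 2 ∂κ a := by
    filter_upwards [κ.aemeasurable.ae_of_bind hf'] with a ha
    calc ‖∫ x, f x ∂κ a‖ₑ ^ 2 ≤ (∫⁻ x, ‖f x‖ₑ ∂κ a) ^ 2 := by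
          gcongr; exact enorm_integral_le_lintegral_enorm _
      _ ≤ κ a Set.univ * ∫⁻ x, ‖f x‖ₑ ^ 2 ∂κ a := lintegral_sq_le_measure_univ_mul _ ha
      _ ≤ m * ∫⁻ x, ‖f x‖ₑ ^ 2 ∂κ a := by gcongr; exact hmass a
  rw [← ENNReal.pow_le_pow_left_iff two_ne_zero, eLpNorm_two_sq_eq_lintegral, mul_pow,
    eLpNorm_two_sq_eq_lintegral]
  calc ∫⁻ a, ‖∫ x, f x ∂κ a‖ₑ ^ 2 ∂μ ≤ ∫⁻ a, m * ∫⁻ x, ‖f x‖ₑ ^ 2 ∂κ a ∂μ :=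
        lintegral_mono_ae hpointwise
    _ = m * ∫⁻ x, ‖f x‖ₑ ^ 2 ∂(κ ∘ₘ μ) := by
        rw [lintegral_const_mul' _ _ ENNReal.coe_ne_top,
          Measure.lintegral_bind κ.aemeasurable (hf'.pow_const 2)]
    _ ≤ m * ∫⁻ x, ‖f x‖ₑ ^ 2 ∂((m : ℝ≥0∞) • ν) := by gcongr
    _ = (m : ℝ≥0∞) ^ 2 * ∫⁻ x, ‖f x‖ₑ ^ 2 ∂ν := by
        rw [lintegral_smul_measure, smul_eq_mul, ← mul_assoc, sq]

theorem eLpNorm_integral_le_of_invariant (P : Kernel α α) [IsMarkovKernel P] {ω : Measure α}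
    (hP : P.Invariant ω) {f : α → E} (hf : AEStronglyMeasurable f ω) :
    eLpNorm (fun a => ∫ x, f x ∂P a) 2 ω ≤ eLpNorm f 2 ω := by
  simpa using eLpNorm_integral_le P (m := 1) (fun a => by simp) (by simp [hP.def]) hf

theorem lpNorm_integral_le_of_invariant (P : Kernel α α) [IsMarkovKernel P] {ω : Measure α}
    (hP : P.Invariant ω) {f : α → E} (hf : MemLp f 2 ω) :
    lpNorm (fun a => ∫ x, f x ∂P a) 2 ω ≤ lpNorm f 2 ω := by
  rw [← toReal_eLpNorm (aestronglyMeasurable_integral P (by rw [hP.def]) hf.1),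
    ← toReal_eLpNorm hf.1]
  exact ENNReal.toReal_mono hf.eLpNorm_ne_top (eLpNorm_integral_le_of_invariant P hP hf.1)

noncomputable def subSMul (κ η : Kernel α β) [IsFiniteKernel η] (c : ℝ≥0)
    (h : ∀ a, c • η a ≤ κ a) : Kernel α β where
  toFun a := κ a - c • η a
  measurable' := Measure.measurable_of_measurable_coe _ fun s hs => by
    simp_rw [Measure.sub_apply hs (h _)]
    exact (κ.measurable_coe hs).sub ((η.measurable_coe hs).const_mul _)

section subSMul
variable {κ η : Kernel α β} [IsFiniteKernel η] {c : ℝ≥0} {h : ∀ a, c • η a ≤ κ a}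

theorem subSMul_apply (a : α) : κ.subSMul η c h a = κ a - c • η a := rfl

theorem subSMul_add_smul (a : α) : κ.subSMul η c h a + c • η a = κ a :=
  Measure.sub_add_cancel_of_le (h a)

theorem subSMul_le (a : α) : κ.subSMul η c h a ≤ κ a := Measure.sub_le

theorem subSMul_apply_univ [IsMarkovKernel κ] [IsMarkovKernel η] (a : α) :
    κ.subSMul η c h a Set.univ = (1 - c : ℝ≥0) := by
  rw [subSMul_apply, Measure.sub_apply .univ (h a)]
  simp

theorem subSMul_comp {μ : Measure α} {ν : Measure β} [IsFiniteMeasure ν] (hκ : κ ∘ₘ μ = ν)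
    (hη : η ∘ₘ μ = ν) : κ.subSMul η c h ∘ₘ μ = ((1 - c : ℝ≥0) : ℝ≥0∞) • ν := by
  ext s hs
  have hηs : ∫⁻ a, c * η a s ∂μ ≠ ∞ := by
    rw [lintegral_const_mul _ (η.measurable_coe hs), ← Measure.bind_apply hs η.aemeasurable, hη]
    finiteness
  rw [Measure.bind_apply hs (Kernel.aemeasurable _), Measure.smul_apply, smul_eq_mul]
  simp_rw [subSMul_apply, Measure.sub_apply hs (h _)]
  simp only [Measure.smul_apply, ENNReal.smul_def, smul_eq_mul]
  rw [lintegral_sub ((η.measurable_coe hs).const_mul _) hηs (ae_of_all _ fun a => (h a) s),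
    lintegral_const_mul _ (η.measurable_coe hs), ← Measure.bind_apply hs κ.aemeasurable,
    ← Measure.bind_apply hs η.aemeasurable, hκ, hη, ENNReal.coe_sub, ENNReal.coe_one,
    ENNReal.sub_mul fun _ _ => measure_ne_top ν s, one_mul]

theorem ae_integral_eq_integral_subSMul_add {μ : Measure α} {f : β → E}
    (hf : Integrable f (κ ∘ₘ μ)) :
    ∀ᵐ a ∂μ, ∫ x, f x ∂κ a = ∫ x, f x ∂κ.subSMul η c h a + (c : ℝ) • ∫ x, f x ∂η a := by
  filter_upwards [Measure.ae_integrable_of_integrable_comp hf] with a ha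
  rw [← NNReal.smul_def, ← integral_smul_nnreal_measure,
    ← integral_add_measure (ha.mono_measure (subSMul_le a)) (ha.mono_measure (h a)),
    subSMul_add_smul]

end subSMul

theorem eLpNorm_integral_le_of_smul_le {P₁ P₂ : Kernel α α} [IsMarkovKernel P₁]
    [IsMarkovKernel P₂] {ω : Measure α} [IsFiniteMeasure ω] (h₁ : P₁.Invariant ω)
    (h₂ : P₂.Invariant ω) {c : ℝ≥0} (hc : ∀ a, c • P₂ a ≤ P₁ a) {f : α → E} (hf : MemLp f 2 ω) :
    eLpNorm (fun a => ∫ x, f x ∂P₁ a) 2 ω ≤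
      c * eLpNorm (fun a => ∫ x, f x ∂P₂ a) 2 ω + (1 - c : ℝ≥0) * eLpNorm f 2 ω := by
  set D := P₁.subSMul P₂ c hc
  have hD : D ∘ₘ ω = ((1 - c : ℝ≥0) : ℝ≥0∞) • ω := subSMul_comp h₁.def h₂.def
  have hDf := aestronglyMeasurable_integral D (hD ▸ Measure.smul_absolutelyContinuous) hf.1
  have hP₂f := aestronglyMeasurable_integral P₂ (by rw [h₂.def]) hf.1
  have hf₁ : Integrable f (P₁ ∘ₘ ω) := by rw [h₁.def]; exact hf.integrable one_le_two
  rw [eLpNorm_congr_ae (ae_integral_eq_integral_subSMul_add (h := hc) hf₁), add_comm]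
  calc _ ≤ eLpNorm (fun a => ∫ x, f x ∂D a) 2 ω +
        eLpNorm (fun a => (c : ℝ) • ∫ x, f x ∂P₂ a) 2 ω :=
        eLpNorm_add_le hDf (hP₂f.const_smul _) one_le_two
    _ ≤ (1 - c : ℝ≥0) * eLpNorm f 2 ω + c * eLpNorm (fun a => ∫ x, f x ∂P₂ a) 2 ω := by
        gcongr
        · exact eLpNorm_integral_le D (fun a => (subSMul_apply_univ a).le) hD.le hf.1
        · exact eLpNorm_const_smul_le.trans_eq (by simp)

theorem lpNorm_integral_le_of_smul_le {P₁ P₂ : Kernel α α} [IsMarkovKernel P₁]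
    [IsMarkovKernel P₂] {ω : Measure α} [IsFiniteMeasure ω] (h₁ : P₁.Invariant ω)
    (h₂ : P₂.Invariant ω) {c : ℝ≥0} (hc : ∀ a, c • P₂ a ≤ P₁ a) {f : α → E} (hf : MemLp f 2 ω) :
    lpNorm (fun a => ∫ x, f x ∂P₁ a) 2 ω ≤
      c * lpNorm (fun a => ∫ x, f x ∂P₂ a) 2 ω + (1 - c : ℝ≥0) * lpNorm f 2 ω := by
  have hP₂f : eLpNorm (fun a => ∫ x, f x ∂P₂ a) 2 ω ≠ ∞ :=
    ((eLpNorm_integral_le_of_invariant P₂ h₂ hf.1).trans_lt hf.2).ne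
  rw [← toReal_eLpNorm (aestronglyMeasurable_integral P₁ (by rw [h₁.def]) hf.1),
    ← toReal_eLpNorm (aestronglyMeasurable_integral P₂ (by rw [h₂.def]) hf.1),
    ← toReal_eLpNorm hf.1]
  calc _ ≤ (c * eLpNorm (fun a => ∫ x, f x ∂P₂ a) 2 ω + (1 - c : ℝ≥0) * eLpNorm f 2 ω).toReal :=
        ENNReal.toReal_mono (by finiteness) (eLpNorm_integral_le_of_smul_le h₁ h₂ hc hf)
    _ = _ := by
        rw [ENNReal.toReal_add (by finiteness) (by finiteness), ENNReal.toReal_mul,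
          ENNReal.toReal_mul, ENNReal.coe_toReal, ENNReal.coe_toReal]

end ProbabilityTheory.Kernel

theorem kernelNorm_nonneg {Z : Type*} [MeasurableSpace Z] (P : Z → Measure Z) (ω : Measure Z) :
    0 ≤ kernelNorm P ω :=
  Real.sSup_nonneg (by rintro _ ⟨f, -, -, -, rfl⟩; positivity)

theorem kernelNorm_le {Z : Type*} [MeasurableSpace Z] {P : Z → Measure Z} {ω : Measure Z}
    {B : ℝ} (hB : 0 ≤ B)
    (h : ∀ f : Z → ℝ, MemLp f 2 ω → ∫ z, f z ∂ω = 0 → ∫ z, f z ^ 2 ∂ω = 1 →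
      √(∫ z, (∫ x, f x ∂P z) ^ 2 ∂ω) ≤ B) :
    kernelNorm P ω ≤ B :=
  Real.sSup_le (by rintro _ ⟨f, hf, hf0, hf1, rfl⟩; exact h f hf hf0 hf1) hB

namespace ProbabilityTheory.Kernel
variable {Z : Type*} [MeasurableSpace Z] {ω : Measure Z}

theorem sqrt_integral_sq_integral_eq_lpNorm {P : Kernel Z Z} (hP : P.Invariant ω) {f : Z → ℝ}
    (hf : AEStronglyMeasurable f ω) :
    √(∫ z, (∫ x, f x ∂P z) ^ 2 ∂ω) = lpNorm (fun z => ∫ x, f x ∂P z) 2 ω :=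
  (lpNorm_two_eq_sqrt_integral_sq (aestronglyMeasurable_integral P (by rw [hP.def]) hf)).symm

theorem le_kernelNorm {P : Kernel Z Z} [IsMarkovKernel P] (hP : P.Invariant ω) {f : Z → ℝ}
    (hf : MemLp f 2 ω) (hf0 : ∫ z, f z ∂ω = 0) (hf1 : ∫ z, f z ^ 2 ∂ω = 1) :
    √(∫ z, (∫ x, f x ∂P z) ^ 2 ∂ω) ≤ kernelNorm (fun z => P z) ω := by
  refine le_csSup ⟨1, ?_⟩ ⟨f, hf, hf0, hf1, rfl⟩
  rintro _ ⟨g, hg, -, hg1, rfl⟩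
  rw [sqrt_integral_sq_integral_eq_lpNorm hP hg.1]
  calc _ ≤ lpNorm g 2 ω := lpNorm_integral_le_of_invariant P hP hg
    _ = 1 := by rw [lpNorm_two_eq_sqrt_integral_sq hg.1, hg1, Real.sqrt_one]

end ProbabilityTheory.Kernel

/-- If `P₁` and `P₂` are Markov transition kernels with common stationary
distribution `ω`, `‖P₂‖_ω < 1`, and `P₁(z,A) ≥ δ P₂(z,A)` for some `δ > 0`,
then `‖P₁‖_ω < 1`. -/
theorem stmt_3 {Z : Type*} [MeasurableSpace Z]
    (ω : Measure Z) [IsProbabilityMeasure ω]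
    (P₁ P₂ : ProbabilityTheory.Kernel Z Z)
    [ProbabilityTheory.IsMarkovKernel P₁] [ProbabilityTheory.IsMarkovKernel P₂]
    (hinv₁ : ∀ A : Set Z, MeasurableSet A → ∫⁻ z, P₁ z A ∂ω = ω A)
    (hinv₂ : ∀ A : Set Z, MeasurableSet A → ∫⁻ z, P₂ z A ∂ω = ω A)
    (hP₂ : kernelNorm (fun z => P₂ z) ω < 1)
    (δ : ℝ) (hδ : 0 < δ)
    (hmin : ∀ (z : Z) (A : Set Z), MeasurableSet A →
      ENNReal.ofReal δ * P₂ z A ≤ P₁ z A) :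
    kernelNorm (fun z => P₁ z) ω < 1 := by
  have h₁ := Kernel.invariant_of_lintegral_eq hinv₁
  have h₂ := Kernel.invariant_of_lintegral_eq hinv₂
  have hδ₁ : δ ≤ 1 := by
    obtain ⟨z⟩ := nonempty_of_isProbabilityMeasure ω
    simpa using hmin z Set.univ .univ
  set c := δ.toNNReal
  -- `ENNReal.ofReal δ` unfolds to `↑δ.toNNReal`, so `hmin` is literally this inequality.
  have hc : ∀ z, c • P₂ z ≤ P₁ z := fun z => Measure.le_iff.2 (hmin z)
  have hcδ : (c : ℝ) = δ ∧ ((1 - c : ℝ≥0) : ℝ) = 1 - δ := by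
    have hc₁ : c ≤ 1 := Real.toNNReal_le_one.2 hδ₁
    simp [c, NNReal.coe_sub hc₁, hδ.le]
  have hN₂ := kernelNorm_nonneg (fun z => P₂ z) ω
  refine (kernelNorm_le (by nlinarith) fun f hf hf0 hf1 => ?_).trans_lt
    (show δ * kernelNorm (fun z => P₂ z) ω + (1 - δ) < 1 by nlinarith)
  have hf1' : lpNorm f 2 ω = 1 := by rw [lpNorm_two_eq_sqrt_integral_sq hf.1, hf1, Real.sqrt_one]
  rw [Kernel.sqrt_integral_sq_integral_eq_lpNorm h₁ hf.1]
  calc _ ≤ c * lpNorm (fun z => ∫ x, f x ∂P₂ z) 2 ω + (1 - c : ℝ≥0) * lpNorm f 2 ω :=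
        Kernel.lpNorm_integral_le_of_smul_le h₁ h₂ hc hf
    _ ≤ δ * kernelNorm (fun z => P₂ z) ω + (1 - δ) := by
        rw [hcδ.1, hcδ.2, hf1', mul_one, ← Kernel.sqrt_integral_sq_integral_eq_lpNorm h₂ hf.1]
        gcongr
        exact Kernel.le_kernelNorm h₂ hf hf0 hf1
end

section
/- Let r ∈ (0,1) and ρ_D ∈ [0,1], and define ρ_R = (1 + √(1 − 4r(1−r)(1 − ρ_D)))/2. Then ρ_R ≥ ρ_D^{r(1−r)}. -/
/-! Writing `t = r(1-r)`, so that `4t ∈ (0,1]`, Bernoulli's inequality gives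
`ρ_D ^ (4t) ≤ 1 - 4t(1 - ρ_D) =: s`, and `s ^ (1/4) = √(√s) ≤ (1 + √s)/2 = ρ_R` by AM-GM. -/

namespace Real

theorem rpow_le_one_sub_mul_one_sub {x w : ℝ} (hx : 0 ≤ x) (hw0 : 0 ≤ w) (hw1 : w ≤ 1) :
    x ^ w ≤ 1 - w * (1 - x) := by
  have h := rpow_one_add_le_one_add_mul_self (s := x - 1) (by linarith) hw0 hw1
  rw [add_sub_cancel] at h
  linarith

theorem rpow_one_fourth_le_one_add_sqrt_div_two {s : ℝ} (hs : 0 ≤ s) :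
    s ^ (1 / 4 : ℝ) ≤ (1 + √s) / 2 := by
  have hsqrt : s ^ (1 / 4 : ℝ) = √(√s) := by
    rw [sqrt_eq_rpow, sqrt_eq_rpow, ← rpow_mul hs]
    norm_num
  rw [hsqrt, sqrt_le_left (by positivity)]
  nlinarith [sq_nonneg (1 - √s)]

end Real

theorem stmt_9_general (r ρD : ℝ) (hr : 0 < r) (hr1 : r < 1) (hρD0 : 0 ≤ ρD) :
    ρD ^ (r * (1 - r)) ≤ (1 + Real.sqrt (1 - 4 * r * (1 - r) * (1 - ρD))) / 2 := by
  set t := r * (1 - r)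
  have ht0 : 0 ≤ 4 * t := by positivity
  have ht1 : 4 * t ≤ 1 := by nlinarith [sq_nonneg (2 * r - 1)]
  calc ρD ^ t = (ρD ^ (4 * t)) ^ (1 / 4 : ℝ) := by rw [← Real.rpow_mul hρD0]; ring_nf
    _ ≤ (1 - 4 * t * (1 - ρD)) ^ (1 / 4 : ℝ) := by
        gcongr
        exact Real.rpow_le_one_sub_mul_one_sub hρD0 ht0 ht1
    _ ≤ (1 + Real.sqrt (1 - 4 * t * (1 - ρD))) / 2 :=
        Real.rpow_one_fourth_le_one_add_sqrt_div_two (by nlinarith)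
    _ = _ := by simp only [t, ← mul_assoc]

/-- For `r ∈ (0,1)` and `ρ_D ∈ [0,1]`, with
`ρ_R = (1 + √(1 - 4r(1-r)(1-ρ_D)))/2`, we have `ρ_R ≥ ρ_D ^ (r(1-r))`. -/
theorem stmt_9 (r ρD : ℝ) (hr : 0 < r) (hr1 : r < 1) (hρD0 : 0 ≤ ρD) (hρD1 : ρD ≤ 1) :
    ρD ^ (r * (1 - r)) ≤ (1 + Real.sqrt (1 - 4 * r * (1 - r) * (1 - ρD))) / 2 :=
  stmt_9_general r ρD hr hr1 hρD0
end

section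
/- Let ρ_D ∈ [0,1], r ∈ (0,1), ρ_R = (1+√(1−4r(1−r)(1−ρ_D)))/2, and suppose ρ_R^{k*} = ρ_D for some k* > 0 (with ρ_D ∈ (0,1)). Then k* ≥ 1/(r(1−r)). -/
/-!
Write `a = r(1-r) ≤ 1/4`. Then `ρ_R ≥ 1/2` is the larger root of `x(1-x) = a(1-ρ_D)`, so
`ρ_D = 1 - x(1-x)/a` with `x = ρ_R`. For `x ≥ 1/2` and `s ≥ 4` one has
`1 - s x(1-x) ≤ x^s`: at `s = 4` the difference is `(1-x)²(x²+2x-1) ≥ 0`, and beyond `s = 4`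
the convex function `s ↦ x^s` lies above its tangent line, whose slope dominates that of
`1 - s x(1-x)`. With `s = 1/a` this gives
`ρ_R^{k*} = ρ_D ≤ ρ_R^{1/a}`, hence `k* ≥ 1/a` because `ρ_R < 1`.
-/

open Real

lemma one_add_mul_one_sub_inv_le_rpow {x t : ℝ} (hx : 0 < x) (ht : 0 ≤ t) :
    1 + t * (1 - x⁻¹) ≤ x ^ t := by
  rw [rpow_def_of_pos hx]
  have hlog : t * (1 - x⁻¹) ≤ log x * t := by
    rw [mul_comm (log x)]
    exact mul_le_mul_of_nonneg_left (one_sub_inv_le_log_of_pos hx) ht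
  linarith [add_one_le_exp (log x * t)]

lemma one_sub_mul_mul_one_sub_le_rpow {x s : ℝ} (hx : 1 / 2 ≤ x) (hs : 4 ≤ s) :
    1 - s * (x * (1 - x)) ≤ x ^ s := by
  have hx0 : 0 < x := by linarith
  have htangent : x ^ (4 : ℕ) * (1 + (s - 4) * (1 - x⁻¹)) ≤ x ^ s := by
    calc x ^ (4 : ℕ) * (1 + (s - 4) * (1 - x⁻¹))
        ≤ x ^ (4 : ℝ) * x ^ (s - 4) := by
          rw [← rpow_natCast, Nat.cast_ofNat]
          exact mul_le_mul_of_nonneg_left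
            (one_add_mul_one_sub_inv_le_rpow hx0 (by linarith)) (by positivity)
      _ = x ^ s := by rw [← rpow_add hx0]; ring_nf
  have hpoly : x ^ (4 : ℕ) * (1 + (s - 4) * (1 - x⁻¹)) - (1 - s * (x * (1 - x)))
      = (1 - x) ^ 2 * (x ^ 2 + 2 * x - 1) + (s - 4) * (x * (1 + x) * (1 - x) ^ 2) := by
    field_simp
    ring
  have hnonneg : 0 ≤ (1 - x) ^ 2 * (x ^ 2 + 2 * x - 1) + (s - 4) * (x * (1 + x) * (1 - x) ^ 2) :=
    add_nonneg (mul_nonneg (sq_nonneg _) (by nlinarith))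
      (mul_nonneg (by linarith) (by positivity))
  linarith

lemma mul_one_sub_eq_of_eq_larger_root {x c : ℝ} (hc : 4 * c ≤ 1)
    (hx : x = (1 + √(1 - 4 * c)) / 2) : x * (1 - x) = c := by
  have hsq := sq_sqrt (by linarith : 0 ≤ 1 - 4 * c)
  subst hx
  nlinarith

lemma larger_root_lt_one {x c : ℝ} (hc : 0 < c) (hx : x = (1 + √(1 - 4 * c)) / 2) : x < 1 := by
  have : √(1 - 4 * c) < 1 := (sqrt_lt' one_pos).mpr (by linarith)
  linarith

theorem stmt_11_general (r ρD ρR k : ℝ) (hr : 0 < r) (hr1 : r < 1)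
    (hρD1 : ρD < 1)
    (hρR : ρR = (1 + Real.sqrt (1 - 4 * r * (1 - r) * (1 - ρD))) / 2)
    (hpow : ρR ^ k = ρD) :
    1 / (r * (1 - r)) ≤ k := by
  set a := r * (1 - r) with ha_def
  have ha : 0 < a := mul_pos hr (by linarith)
  have ha4 : 4 * a ≤ 1 := by nlinarith [sq_nonneg (2 * r - 1)]
  have hρR' : ρR = (1 + √(1 - 4 * (a * (1 - ρD)))) / 2 := by rw [hρR, ha_def]; ring_nf
  have hhalf : 1 / 2 ≤ ρR := by rw [hρR']; linarith [sqrt_nonneg (1 - 4 * (a * (1 - ρD)))]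
  have hρD0 : 0 < ρD := hpow ▸ rpow_pos_of_pos (by linarith) k
  have hroot : ρR * (1 - ρR) = a * (1 - ρD) :=
    mul_one_sub_eq_of_eq_larger_root (by nlinarith) hρR'
  have hlt : ρR < 1 := larger_root_lt_one (mul_pos ha (by linarith)) hρR'
  have hle : ρR ^ k ≤ ρR ^ (1 / a) := by
    have h := one_sub_mul_mul_one_sub_le_rpow hhalf (s := 1 / a)
      (by rw [le_div_iff₀ ha]; linarith)
    rwa [hroot, show 1 - 1 / a * (a * (1 - ρD)) = ρD by field_simp; ring, ← hpow] at h
  exact (rpow_le_rpow_left_iff_of_base_lt_one (by linarith) hlt).mp hle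

/-- If `ρ_D ∈ (0,1)`, `r ∈ (0,1)`, `ρ_R = (1+√(1-4r(1-r)(1-ρ_D)))/2` and
`ρ_R ^ k* = ρ_D` for some `k* > 0`, then `k* ≥ 1/(r(1-r))`. -/
theorem stmt_11 (r ρD ρR k : ℝ) (hr : 0 < r) (hr1 : r < 1)
    (hρD0 : 0 < ρD) (hρD1 : ρD < 1)
    (hρR : ρR = (1 + Real.sqrt (1 - 4 * r * (1 - r) * (1 - ρD))) / 2)
    (hk : 0 < k) (hpow : ρR ^ k = ρD) :
    1 / (r * (1 - r)) ≤ k :=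
  stmt_11_general r ρD ρR k hr hr1 hρD1 hρR hpow
end

section
/- Let Q₁ : K_Y → K_X and Q₂ : K_X → K_Y be bounded linear maps between Hilbert spaces with ‖Q₁‖ ≤ 1 and ‖Q₂‖ ≤ 1, set P_X = Q₁Q₂ and P_Y = Q₂Q₁, and assume ‖P_X‖ ≤ γ̄² and ‖P_Y‖ ≤ γ̄² for some γ̄ ∈ [0,1]. Fix r ∈ (0,1) and ρ ∈ (max{r, 1−r}, 1]. Suppose (g_n) ⊂ K_X and (h_n) ⊂ K_Y satisfy (1 − r − ρ) g_n + (1−r) Q₁ h_n → 0 and (r − ρ) h_n + r Q₂ g_n → 0, with ‖g_n‖ + ‖h_n‖ ≥ 1 for all n. Then (ρ + r − 1)(ρ − r) ≤ r(1−r) γ̄². -/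
/-!
Suppose the inequality fails. Applying `Q₁` to the second limit and eliminating `Q₁ h_n`
gives `(1 - r - ρ)(r - ρ) g_n - r(1 - r) P_X g_n → 0`, and symmetrically for `h_n`. Since
`r(1 - r)‖P_X‖ ≤ r(1 - r)γ̄² < (1 - r - ρ)(r - ρ)`, the operator `(1 - r - ρ)(r - ρ) - r(1 - r) P_X`
is bounded below, so `g_n → 0`; likewise `h_n → 0`, contradicting `‖g_n‖ + ‖h_n‖ ≥ 1`.
-/

open Filter Topology

section

variable {𝕜 E F ι : Type*} [NontriviallyNormedField 𝕜]
  [NormedAddCommGroup E] [NormedSpace 𝕜 E] [NormedAddCommGroup F] [NormedSpace 𝕜 F]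
  {l : Filter ι}

theorem tendsto_smul_sub_smul_comp_of_tendsto (Q₁ : F →L[𝕜] E) (Q₂ : E →L[𝕜] F)
    {a b c d : 𝕜} {g : ι → E} {h : ι → F}
    (hg : Tendsto (fun n => a • g n + b • Q₁ (h n)) l (𝓝 0))
    (hh : Tendsto (fun n => c • h n + d • Q₂ (g n)) l (𝓝 0)) :
    Tendsto (fun n => (a * c) • g n - (b * d) • Q₁ (Q₂ (g n))) l (𝓝 0) := by
  have hQ₁h : Tendsto (fun n => Q₁ (c • h n + d • Q₂ (g n))) l (𝓝 0) := by
    simpa [Function.comp_def] using (Q₁.continuous.tendsto 0).comp hh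
  have := (hg.const_smul c).sub (hQ₁h.const_smul b)
  simp only [smul_zero, sub_zero] at this
  convert this using 2 with n
  simp only [map_add, map_smul, smul_add, smul_smul]
  module

end

section

variable {E ι : Type*} [NormedAddCommGroup E] [NormedSpace ℝ E] {l : Filter ι}

theorem norm_le_norm_smul_sub_smul_apply_div (T : E →L[ℝ] E) {s t : ℝ}
    (hst : |t| * ‖T‖ < s) (x : E) :
    ‖x‖ ≤ ‖s • x - t • T x‖ / (s - |t| * ‖T‖) := by
  have hs : 0 < s := (mul_nonneg (abs_nonneg t) (norm_nonneg T)).trans_lt hst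
  rw [le_div_iff₀ (sub_pos.2 hst)]
  have hTx : ‖t • T x‖ ≤ |t| * ‖T‖ * ‖x‖ := by
    rw [norm_smul, Real.norm_eq_abs, mul_assoc]
    exact mul_le_mul_of_nonneg_left (T.le_opNorm x) (abs_nonneg t)
  calc ‖x‖ * (s - |t| * ‖T‖) ≤ ‖s • x‖ - ‖t • T x‖ := by
        rw [norm_smul, Real.norm_eq_abs, abs_of_pos hs]; linarith
    _ ≤ ‖s • x - t • T x‖ := norm_sub_norm_le _ _

theorem tendsto_zero_of_tendsto_smul_sub_smul_apply (T : E →L[ℝ] E) {s t : ℝ}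
    (hst : |t| * ‖T‖ < s) {x : ι → E}
    (hx : Tendsto (fun n => s • x n - t • T (x n)) l (𝓝 0)) :
    Tendsto x l (𝓝 0) := by
  rw [tendsto_zero_iff_norm_tendsto_zero]
  refine squeeze_zero (fun n => norm_nonneg _)
    (fun n => norm_le_norm_smul_sub_smul_apply_div T hst (x n)) ?_
  simpa using hx.norm.div_const (s - |t| * ‖T‖)

end

theorem stmt_14_general {KX KY : Type*} [NormedAddCommGroup KX] [InnerProductSpace ℝ KX]
    [NormedAddCommGroup KY] [InnerProductSpace ℝ KY]
    (Q₁ : KY →L[ℝ] KX) (Q₂ : KX →L[ℝ] KY)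
    (γ : ℝ)
    (hPX : ‖Q₁.comp Q₂‖ ≤ γ^2) (hPY : ‖Q₂.comp Q₁‖ ≤ γ^2)
    (r ρ : ℝ) (hr : 0 < r) (hr1 : r < 1)
    (g : ℕ → KX) (h : ℕ → KY)
    (hg : Tendsto (fun n => (1 - r - ρ) • g n + (1 - r) • Q₁ (h n)) atTop (nhds 0))
    (hh : Tendsto (fun n => (r - ρ) • h n + r • Q₂ (g n)) atTop (nhds 0))
    (hunit : ∀ n, 1 ≤ ‖g n‖ + ‖h n‖) :
    (ρ + r - 1) * (ρ - r) ≤ r * (1 - r) * γ^2 := by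
  by_contra! hcon
  have hrr : 0 ≤ r * (1 - r) := mul_nonneg hr.le (sub_nonneg.2 hr1.le)
  have hgapX : |(1 - r) * r| * ‖Q₁.comp Q₂‖ < (1 - r - ρ) * (r - ρ) := by
    rw [mul_comm (1 - r), abs_of_nonneg hrr]
    nlinarith [mul_le_mul_of_nonneg_left hPX hrr]
  have hgapY : |r * (1 - r)| * ‖Q₂.comp Q₁‖ < (r - ρ) * (1 - r - ρ) := by
    rw [abs_of_nonneg hrr]
    nlinarith [mul_le_mul_of_nonneg_left hPY hrr]
  have hg0 : Tendsto g atTop (𝓝 0) := tendsto_zero_of_tendsto_smul_sub_smul_apply _ hgapX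
    (tendsto_smul_sub_smul_comp_of_tendsto Q₁ Q₂ hg hh)
  have hh0 : Tendsto h atTop (𝓝 0) := tendsto_zero_of_tendsto_smul_sub_smul_apply _ hgapY
    (tendsto_smul_sub_smul_comp_of_tendsto Q₂ Q₁ hh hg)
  have hsum : Tendsto (fun n => ‖g n‖ + ‖h n‖) atTop (𝓝 0) := by
    simpa using hg0.norm.add hh0.norm
  linarith [ge_of_tendsto' hsum hunit]

/-- The abstract operator-theoretic heart of the upper bound in the main theorem:
with `Q₁ : K_Y →L K_X`, `Q₂ : K_X →L K_Y` of norm at most 1, `P_X = Q₁Q₂` and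
`P_Y = Q₂Q₁` of norm at most `γ̄²`, `r ∈ (0,1)`, `ρ ∈ (max{r,1-r}, 1]`, and sequences
`g_n`, `h_n` with `(1-r-ρ)g_n + (1-r)Q₁h_n → 0`, `(r-ρ)h_n + rQ₂g_n → 0` and
`‖g_n‖ + ‖h_n‖ ≥ 1`, we get `(ρ+r-1)(ρ-r) ≤ r(1-r)γ̄²`. -/
theorem stmt_14 {KX KY : Type*} [NormedAddCommGroup KX] [InnerProductSpace ℝ KX]
    [CompleteSpace KX] [NormedAddCommGroup KY] [InnerProductSpace ℝ KY]
    [CompleteSpace KY]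
    (Q₁ : KY →L[ℝ] KX) (Q₂ : KX →L[ℝ] KY)
    (hQ₁ : ‖Q₁‖ ≤ 1) (hQ₂ : ‖Q₂‖ ≤ 1)
    (γ : ℝ) (hγ0 : 0 ≤ γ) (hγ1 : γ ≤ 1)
    (hPX : ‖Q₁.comp Q₂‖ ≤ γ^2) (hPY : ‖Q₂.comp Q₁‖ ≤ γ^2)
    (r ρ : ℝ) (hr : 0 < r) (hr1 : r < 1) (hρlb : max r (1 - r) < ρ) (hρub : ρ ≤ 1)
    (g : ℕ → KX) (h : ℕ → KY)
    (hg : Tendsto (fun n => (1 - r - ρ) • g n + (1 - r) • Q₁ (h n)) atTop (nhds 0))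
    (hh : Tendsto (fun n => (r - ρ) • h n + r • Q₂ (g n)) atTop (nhds 0))
    (hunit : ∀ n, 1 ≤ ‖g n‖ + ‖h n‖) :
    (ρ + r - 1) * (ρ - r) ≤ r * (1 - r) * γ^2 :=
  stmt_14_general Q₁ Q₂ γ hPX hPY r ρ hr hr1 g h hg hh hunit
end

section
/- Let Q₁ : K_Y → K_X and Q₂ : K_X → K_Y be bounded linear maps between Hilbert spaces, and define the 'random-scan' operator T on K_X × K_Y by T(g, h) = ((1−r)(g + Q₁h), r(Q₂g + h)) for fixed r ∈ (0,1). Suppose P_X = Q₁Q₂ is self-adjoint non-negative definite on K_X with ‖P_X‖ = γ̄² for some γ̄ ∈ (0,1). If (ĝ_n) is a sequence in K_X with ‖ĝ_n‖ = 1 and P_X ĝ_n − γ̄² ĝ_n → 0, and a = (2r−1+√(1−4r(1−r)(1−γ̄²)))/(2(1−r)γ̄²), then T(ĝ_n, aQ₂ĝ_n) − λ (ĝ_n, aQ₂ĝ_n) → 0 where λ = (1+√(1−4r(1−r)(1−γ̄²)))/2. -/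
/-!
Write `c = γ̄²`. On vectors of the form `(g, a Q₂ g)` the operator acts by
`T(g, a Q₂ g) = ((1 - r)(g + a P_X g), r(1 + a) Q₂ g)`, so such a vector is an approximate
eigenvector for `λ` as soon as `P_X g ≈ c g`, `(1 - r)(1 + a c) = λ` and `r(1 + a) = λ a`.
Eliminating `λ`, the two scalar conditions say that `a` is a root of
`(1 - r) c a² + (1 - 2r) a - r = 0`, whose discriminant is `1 - 4r(1 - r)(1 - c)`;
the given `a` is the larger root and `λ` the corresponding value.
-/

open RealInnerProductSpace Filter Topology

section RandomScan

variable {R E F : Type*} [CommRing R] [AddCommGroup E] [Module R E] [AddCommGroup F] [Module R F]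

def randomScan (r : R) (Q₁ : F →ₗ[R] E) (Q₂ : E →ₗ[R] F) (p : E × F) : E × F :=
  ((1 - r) • (p.1 + Q₁ p.2), r • (Q₂ p.1 + p.2))

theorem randomScan_sub_smul_eq {r c a lam : R} (Q₁ : F →ₗ[R] E) (Q₂ : E →ₗ[R] F)
    (h₁ : (1 - r) * (1 + a * c) = lam) (h₂ : r * (1 + a) = lam * a) (g : E) :
    randomScan r Q₁ Q₂ (g, a • Q₂ g) - lam • (g, a • Q₂ g)
      = (((1 - r) * a) • (Q₁ (Q₂ g) - c • g), 0) := by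
  refine Prod.ext ?_ ?_
  · simp only [randomScan, Prod.fst_sub, Prod.smul_fst, map_smul, ← h₁]
    module
  · simp only [randomScan, Prod.snd_sub, Prod.smul_snd, smul_smul, ← h₂]
    module

theorem tendsto_randomScan_sub_smul [TopologicalSpace E] [ContinuousConstSMul R E]
    [TopologicalSpace F] {r c a lam : R}
    (Q₁ : F →ₗ[R] E) (Q₂ : E →ₗ[R] F)
    (h₁ : (1 - r) * (1 + a * c) = lam) (h₂ : r * (1 + a) = lam * a) {g : ℕ → E}
    (hg : Tendsto (fun n => Q₁ (Q₂ (g n)) - c • g n) atTop (𝓝 0)) :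
    Tendsto (fun n => randomScan r Q₁ Q₂ (g n, a • Q₂ (g n)) - lam • (g n, a • Q₂ (g n)))
      atTop (𝓝 0) := by
  simp only [randomScan_sub_smul_eq Q₁ Q₂ h₁ h₂]
  rw [← Prod.mk_zero_zero]
  simpa only [smul_zero] using (hg.const_smul ((1 - r) * a)).prodMk_nhds tendsto_const_nhds

end RandomScan

section Coefficients

variable {r c s : ℝ}

theorem randomScan_discriminant_nonneg (hr0 : 0 ≤ r) (hr1 : r ≤ 1) (hc : 0 ≤ c) :
    0 ≤ 1 - 4 * r * (1 - r) * (1 - c) := by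
  nlinarith [sq_nonneg (2 * r - 1), mul_nonneg hr0 (sub_nonneg.2 hr1), mul_nonneg
    (mul_nonneg hr0 (sub_nonneg.2 hr1)) hc]

theorem one_sub_mul_one_add_randomScanCoeff (hr : r ≠ 1) (hc : c ≠ 0) :
    (1 - r) * (1 + (2 * r - 1 + s) / (2 * (1 - r) * c) * c) = (1 + s) / 2 := by
  have : 1 - r ≠ 0 := sub_ne_zero.2 (Ne.symm hr)
  field_simp
  ring

theorem mul_one_add_randomScanCoeff (hr : r ≠ 1) (hc : c ≠ 0)
    (hs : s ^ 2 = 1 - 4 * r * (1 - r) * (1 - c)) :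
    r * (1 + (2 * r - 1 + s) / (2 * (1 - r) * c))
      = (1 + s) / 2 * ((2 * r - 1 + s) / (2 * (1 - r) * c)) := by
  have : 1 - r ≠ 0 := sub_ne_zero.2 (Ne.symm hr)
  field_simp
  linear_combination -hs

end Coefficients

theorem stmt_16_general {KX KY : Type*} [NormedAddCommGroup KX] [InnerProductSpace ℝ KX]
    [NormedAddCommGroup KY] [InnerProductSpace ℝ KY]
    (Q₁ : KY →L[ℝ] KX) (Q₂ : KX →L[ℝ] KY) (r γ : ℝ)
    (hr : 0 < r) (hr1 : r < 1) (hγ0 : 0 < γ)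
    (T : KX × KY → KX × KY)
    (hT : ∀ p : KX × KY, T p = ((1 - r) • (p.1 + Q₁ p.2), r • (Q₂ p.1 + p.2)))
    (gh : ℕ → KX)
    (happrox : Tendsto (fun n => Q₁ (Q₂ (gh n)) - γ^2 • gh n) atTop (nhds 0)) :
    let a := (2*r - 1 + Real.sqrt (1 - 4*r*(1-r)*(1-γ^2))) / (2*(1-r)*γ^2)
    let lam := (1 + Real.sqrt (1 - 4*r*(1-r)*(1-γ^2))) / 2
    Tendsto (fun n => T (gh n, a • Q₂ (gh n)) - lam • ((gh n, a • Q₂ (gh n)) : KX × KY))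
      atTop (nhds 0) := by
  intro a lam
  have hr1' : r ≠ 1 := hr1.ne
  have hγ2 : γ ^ 2 ≠ 0 := by positivity
  have hs := Real.sq_sqrt (randomScan_discriminant_nonneg hr.le hr1.le (sq_nonneg γ))
  have hT' : T = randomScan r (Q₁ : KY →ₗ[ℝ] KX) Q₂ := funext hT
  rw [hT']
  exact tendsto_randomScan_sub_smul _ _ (one_sub_mul_one_add_randomScanCoeff hr1' hγ2)
    (mul_one_add_randomScanCoeff hr1' hγ2 hs) happrox

/-- The approximate-eigenvector construction for the random-scan operator
`T(g,h) = ((1-r)(g + Q₁h), r(Q₂g + h))`: if `P_X = Q₁Q₂` is self-adjoint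
non-negative definite with `‖P_X‖ = γ̄²`, `γ̄ ∈ (0,1)`, and `gh_n` are unit vectors
with `P_X gh_n - γ̄² gh_n → 0`, then with
`a = (2r-1+√(1-4r(1-r)(1-γ̄²)))/(2(1-r)γ̄²)` and
`λ = (1+√(1-4r(1-r)(1-γ̄²)))/2`,
`T(gh_n, aQ₂gh_n) - λ(gh_n, aQ₂gh_n) → 0`. -/
theorem stmt_16 {KX KY : Type*} [NormedAddCommGroup KX] [InnerProductSpace ℝ KX]
    [CompleteSpace KX] [NormedAddCommGroup KY] [InnerProductSpace ℝ KY]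
    [CompleteSpace KY]
    (Q₁ : KY →L[ℝ] KX) (Q₂ : KX →L[ℝ] KY) (r γ : ℝ)
    (hr : 0 < r) (hr1 : r < 1) (hγ0 : 0 < γ) (hγ1 : γ < 1)
    (T : KX × KY → KX × KY)
    (hT : ∀ p : KX × KY, T p = ((1 - r) • (p.1 + Q₁ p.2), r • (Q₂ p.1 + p.2)))
    (hsa : ∀ f g : KX, ⟪Q₁ (Q₂ f), g⟫ = ⟪f, Q₁ (Q₂ g)⟫)
    (hpos : ∀ f : KX, 0 ≤ ⟪Q₁ (Q₂ f), f⟫)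
    (hnorm : ‖Q₁.comp Q₂‖ = γ^2)
    (gh : ℕ → KX) (hunit : ∀ n, ‖gh n‖ = 1)
    (happrox : Tendsto (fun n => Q₁ (Q₂ (gh n)) - γ^2 • gh n) atTop (nhds 0)) :
    let a := (2*r - 1 + Real.sqrt (1 - 4*r*(1-r)*(1-γ^2))) / (2*(1-r)*γ^2)
    let lam := (1 + Real.sqrt (1 - 4*r*(1-r)*(1-γ^2))) / 2
    Tendsto (fun n => T (gh n, a • Q₂ (gh n)) - lam • ((gh n, a • Q₂ (gh n)) : KX × KY))
      atTop (nhds 0) :=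
  stmt_16_general Q₁ Q₂ r γ hr hr1 hγ0 T hT gh happrox
end
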